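/- Let dμ be a measure on ℝ of infinite support with all moments finite, p_n its orthonormal polynomials with recursion x p_n(x) = a_{n+1} p_{n+1}(x) + b_{n+1} p_n(x) + a_n p_{n-1}(x), and K_n(x,y) = Σ_{j=0}^n p_j(x) p_j(y). Then for every real x and n, K_n(x,x) · dist(x, supp dμ)² ≤ a_{n+1}² (p_{n+1}(x)² + p_n(x)²). -/

import Mathlib

open MeasureTheory Polynomial

def measSupport (μ : Measure ℝ) : Set ℝ :=
  {x | ∀ ε > 0, 0 < μ (Metric.ball x ε)}

/-!
Write `K(y) = K_n(x, y)`. By orthonormality `∫ K² dμ = K_n(x, x)`, and by the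
Christoffel–Darboux formula `(y - x) K(y) = a_{n+1} (p_{n+1}(y) p_n(x) - p_n(y) p_{n+1}(x))`,
so again by orthonormality `∫ (y - x)² K(y)² dμ = a_{n+1}² (p_{n+1}(x)² + p_n(x)²)`.
Since `μ` lives on its support, `(y - x)² ≥ dist(x, supp μ)²` for `μ`-a.e. `y`;
integrate this against `K²`.
-/

theorem measSupport_eq_support (μ : Measure ℝ) : measSupport μ = μ.support := by
  ext x
  rw [Measure.mem_support_iff_forall]
  refine ⟨fun h U hU => ?_, fun h ε hε => h _ (Metric.ball_mem_nhds x hε)⟩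
  obtain ⟨ε, hε, hball⟩ := Metric.mem_nhds_iff.mp hU
  exact (h ε hε).trans_le (measure_mono hball)

theorem ae_infDist_measSupport_sq_le (μ : Measure ℝ) (x : ℝ) :
    ∀ᵐ y ∂μ, Metric.infDist x (measSupport μ) ^ 2 ≤ (y - x) ^ 2 := by
  filter_upwards [measSupport_eq_support μ ▸ Measure.support_mem_ae] with y hy
  rw [← sq_abs (y - x), ← Real.dist_eq, dist_comm]
  gcongr
  · exact Metric.infDist_nonneg
  · exact Metric.infDist_le_dist_of_mem hy

theorem integrable_eval_of_integrable_abs_pow {μ : Measure ℝ}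
    (hmom : ∀ n : ℕ, Integrable (fun x : ℝ => |x| ^ n) μ) (q : ℝ[X]) :
    Integrable (fun y => q.eval y) μ := by
  have hmonomial (i : ℕ) : Integrable (fun y : ℝ => q.coeff i * y ^ i) μ :=
    ((hmom i).mono' (continuous_pow i).aestronglyMeasurable
      (.of_forall fun y => by rw [Real.norm_eq_abs, abs_pow])).const_mul _
  simp_rw [eval_eq_sum_range]
  exact integrable_finsetSum _ fun i _ => hmonomial i

section OrthonormalFamily

variable {ι : Type*} {μ : Measure ℝ} {f : ι → ℝ → ℝ} (s : Finset ι) (c : ι → ℝ)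

theorem sq_sum_mul_eq_sum_sum (y : ℝ) :
    (∑ k ∈ s, c k * f k y) ^ 2 = ∑ j ∈ s, ∑ k ∈ s, c j * c k * (f j y * f k y) := by
  rw [sq, Finset.sum_mul_sum]
  exact Finset.sum_congr rfl fun j _ => Finset.sum_congr rfl fun k _ => by ring

theorem integrable_sq_sum_mul (hint : ∀ j k, Integrable (fun y => f j y * f k y) μ) :
    Integrable (fun y => (∑ k ∈ s, c k * f k y) ^ 2) μ := by
  simp_rw [sq_sum_mul_eq_sum_sum]
  exact integrable_finsetSum _ fun j _ =>
    integrable_finsetSum _ fun k _ => (hint j k).const_mul _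

theorem integral_sq_sum_mul_of_orthonormal [DecidableEq ι]
    (hint : ∀ j k, Integrable (fun y => f j y * f k y) μ)
    (horth : ∀ j k, ∫ y, f j y * f k y ∂μ = if j = k then 1 else 0) :
    ∫ y, (∑ k ∈ s, c k * f k y) ^ 2 ∂μ = ∑ k ∈ s, c k ^ 2 := by
  simp_rw [sq_sum_mul_eq_sum_sum]
  rw [integral_finsetSum _ fun j _ =>
    integrable_finsetSum _ fun k _ => (hint j k).const_mul _]
  refine Finset.sum_congr rfl fun j hj => ?_
  rw [integral_finsetSum _ fun k _ => (hint j k).const_mul _]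
  simp only [integral_const_mul, horth, mul_ite, mul_one, mul_zero, Finset.sum_ite_eq, hj,
    if_true, sq]

end OrthonormalFamily

noncomputable def cdKernel (p : ℕ → ℝ[X]) (n : ℕ) (x y : ℝ) : ℝ :=
  ∑ k ∈ Finset.range (n + 1), (p k).eval x * (p k).eval y

theorem sub_mul_cdKernel {p : ℕ → ℝ[X]} {a b : ℕ → ℝ}
    (hrec : ∀ k x, x * (p k).eval x
      = a (k + 1) * (p (k + 1)).eval x + b (k + 1) * (p k).eval x
        + (if k = 0 then 0 else a k * (p (k - 1)).eval x)) (n : ℕ) (x y : ℝ) :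
    (y - x) * cdKernel p n x y
      = a (n + 1) * ((p (n + 1)).eval y * (p n).eval x - (p n).eval y * (p (n + 1)).eval x) := by
  induction n with
  | zero =>
    have hy := hrec 0 y
    have hx := hrec 0 x
    simp only [if_true, add_zero, zero_add] at hy hx
    rw [cdKernel, Finset.sum_range_one]
    linear_combination (p 0).eval x * hy - (p 0).eval y * hx
  | succ n ih =>
    have hy := hrec (n + 1) y
    have hx := hrec (n + 1) x
    simp only [Nat.add_one_ne_zero, if_false, Nat.add_sub_cancel] at hy hx
    rw [cdKernel, Finset.sum_range_succ, ← cdKernel]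
    linear_combination ih + (p (n + 1)).eval x * hy - (p (n + 1)).eval y * hx

theorem sub_mul_cdKernel_eq_sum_pair {p : ℕ → ℝ[X]} {a b : ℕ → ℝ}
    (hrec : ∀ k x, x * (p k).eval x
      = a (k + 1) * (p (k + 1)).eval x + b (k + 1) * (p k).eval x
        + (if k = 0 then 0 else a k * (p (k - 1)).eval x)) (n : ℕ) (x y : ℝ) :
    (y - x) * cdKernel p n x y = ∑ k ∈ {n + 1, n},
      a (n + 1) * (if k = n + 1 then (p n).eval x else -(p (n + 1)).eval x) * (p k).eval y := by
  rw [sub_mul_cdKernel hrec, Finset.sum_pair (Nat.succ_ne_self n)]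
  simp only [↓reduceIte, Nat.ne_add_one n]
  ring

section OrthonormalPolynomials

variable {μ : Measure ℝ} {p : ℕ → ℝ[X]} (hmom : ∀ n : ℕ, Integrable (fun x : ℝ => |x| ^ n) μ)
include hmom

theorem integrable_eval_mul_eval (j k : ℕ) :
    Integrable (fun y => (p j).eval y * (p k).eval y) μ := by
  simpa only [eval_mul] using integrable_eval_of_integrable_abs_pow hmom (p j * p k)

theorem integrable_cdKernel_sq (n : ℕ) (x : ℝ) :
    Integrable (fun y => cdKernel p n x y ^ 2) μ :=
  integrable_sq_sum_mul _ _ (integrable_eval_mul_eval hmom)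

theorem integral_cdKernel_sq
    (horth : ∀ k m, ∫ x, (p k).eval x * (p m).eval x ∂μ = if k = m then 1 else 0)
    (n : ℕ) (x : ℝ) :
    ∫ y, cdKernel p n x y ^ 2 ∂μ = ∑ k ∈ Finset.range (n + 1), (p k).eval x ^ 2 :=
  integral_sq_sum_mul_of_orthonormal _ _ (integrable_eval_mul_eval hmom) horth

variable {a b : ℕ → ℝ} (hrec : ∀ k x, x * (p k).eval x
      = a (k + 1) * (p (k + 1)).eval x + b (k + 1) * (p k).eval x
        + (if k = 0 then 0 else a k * (p (k - 1)).eval x))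
include hrec

theorem integrable_sub_mul_cdKernel_sq (n : ℕ) (x : ℝ) :
    Integrable (fun y => ((y - x) * cdKernel p n x y) ^ 2) μ := by
  simp_rw [sub_mul_cdKernel_eq_sum_pair hrec]
  exact integrable_sq_sum_mul _ _ (integrable_eval_mul_eval hmom)

theorem integral_sub_mul_cdKernel_sq
    (horth : ∀ k m, ∫ x, (p k).eval x * (p m).eval x ∂μ = if k = m then 1 else 0)
    (n : ℕ) (x : ℝ) :
    ∫ y, ((y - x) * cdKernel p n x y) ^ 2 ∂μ
      = a (n + 1) ^ 2 * ((p (n + 1)).eval x ^ 2 + (p n).eval x ^ 2) := by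
  simp_rw [sub_mul_cdKernel_eq_sum_pair hrec]
  rw [integral_sq_sum_mul_of_orthonormal _ _ (integrable_eval_mul_eval hmom) horth,
    Finset.sum_pair (Nat.succ_ne_self n)]
  simp only [↓reduceIte, Nat.ne_add_one n]
  ring

end OrthonormalPolynomials

theorem stmt_3_general (μ : Measure ℝ)
    (hmom : ∀ n : ℕ, Integrable (fun x : ℝ => |x| ^ n) μ)
    (p : ℕ → Polynomial ℝ) (a b : ℕ → ℝ)
    (horth : ∀ k m, ∫ x, (p k).eval x * (p m).eval x ∂μ = if k = m then 1 else 0)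
    (hrec : ∀ k x, x * (p k).eval x
      = a (k + 1) * (p (k + 1)).eval x + b (k + 1) * (p k).eval x
        + (if k = 0 then 0 else a k * (p (k - 1)).eval x))
    (n : ℕ) (x : ℝ) :
    (∑ k ∈ Finset.range (n + 1), (p k).eval x ^ 2) * Metric.infDist x (measSupport μ) ^ 2
      ≤ a (n + 1) ^ 2 * ((p (n + 1)).eval x ^ 2 + (p n).eval x ^ 2) := by
  set d := Metric.infDist x (measSupport μ)
  have hbound : ∀ᵐ y ∂μ, d ^ 2 * cdKernel p n x y ^ 2 ≤ ((y - x) * cdKernel p n x y) ^ 2 := by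
    filter_upwards [ae_infDist_measSupport_sq_le μ x] with y hy
    rw [mul_pow]
    exact mul_le_mul_of_nonneg_right hy (sq_nonneg _)
  calc (∑ k ∈ Finset.range (n + 1), (p k).eval x ^ 2) * d ^ 2
      = ∫ y, d ^ 2 * cdKernel p n x y ^ 2 ∂μ := by
        rw [integral_const_mul, integral_cdKernel_sq hmom horth, mul_comm]
    _ ≤ ∫ y, ((y - x) * cdKernel p n x y) ^ 2 ∂μ :=
        integral_mono_ae ((integrable_cdKernel_sq hmom n x).const_mul _)
          (integrable_sub_mul_cdKernel_sq hmom hrec n x) hbound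
    _ = a (n + 1) ^ 2 * ((p (n + 1)).eval x ^ 2 + (p n).eval x ^ 2) :=
        integral_sub_mul_cdKernel_sq hmom hrec horth n x

/-- Lemma 2.2: `K_n(x,x) · dist(x, supp μ)² ≤ a_{n+1}² (p_{n+1}(x)² + p_n(x)²)`. -/
theorem stmt_3 (μ : Measure ℝ)
    (hmom : ∀ n : ℕ, Integrable (fun x : ℝ => |x| ^ n) μ)
    (hinf : (measSupport μ).Infinite)
    (p : ℕ → Polynomial ℝ) (a b : ℕ → ℝ)
    (ha : ∀ k, 0 < a k)
    (hdeg : ∀ k, (p k).natDegree = k)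
    (hlead : ∀ k, 0 < (p k).leadingCoeff)
    (horth : ∀ k m, ∫ x, (p k).eval x * (p m).eval x ∂μ = if k = m then 1 else 0)
    (hrec : ∀ k x, x * (p k).eval x
      = a (k + 1) * (p (k + 1)).eval x + b (k + 1) * (p k).eval x
        + (if k = 0 then 0 else a k * (p (k - 1)).eval x))
    (n : ℕ) (x : ℝ) :
    (∑ k ∈ Finset.range (n + 1), (p k).eval x ^ 2) * Metric.infDist x (measSupport μ) ^ 2
      ≤ a (n + 1) ^ 2 * ((p (n + 1)).eval x ^ 2 + (p n).eval x ^ 2) :=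
  stmt_3_general μ hmom p a b horth hrec n x
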